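/- arXiv:0810.3695 — 5 statements merged into one kernel-verified Lean document; each statement's English description precedes it below -/
import Mathlib

section
/- Let H be a subgroup of the Weyl–Heisenberg group G that intersects the center of G trivially. Then the normalizer of H in G (the set of g ∈ G with g⁻¹Hg = H) equals {(x,y,z) ∈ G : (x,y) ∈ S_H^⊥}, where S_H^⊥ is the orthogonal complement of S_H under the symplectic inner product. -/
/-- Dot product of two vectors over `ZMod p`. -/
def dot {p n : ℕ} (u v : Fin n → ZMod p) : ZMod p := ∑ i, u i * v i

/-- The underlying set of the Weyl–Heisenberg group: triples `(x, y, z)`. -/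
@[ext] structure WH (p n : ℕ) where
  x : Fin n → ZMod p
  y : Fin n → ZMod p
  z : ZMod p

namespace WH

variable {p n : ℕ}

/-- Multiplication `(x,y,z)·(x',y',z') = (x+x', y+y', z+z'+x'·y)`. -/
def wmul (g h : WH p n) : WH p n := ⟨g.x + h.x, g.y + h.y, g.z + h.z + dot h.x g.y⟩

def wone : WH p n := ⟨0, 0, 0⟩

def winv (g : WH p n) : WH p n := ⟨-g.x, -g.y, dot g.x g.y - g.z⟩

instance : Group (WH p n) where
  mul := wmul
  one := wone
  inv := winv
  mul_assoc g h k := by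
    show wmul (wmul g h) k = wmul g (wmul h k)
    simp only [wmul, dot, mk.injEq, Pi.add_apply, mul_add, add_mul,
      Finset.sum_add_distrib]
    refine ⟨by abel, by abel, by ring⟩
  one_mul g := by
    show wmul wone g = g
    obtain ⟨x, y, z⟩ := g
    simp [wmul, wone, dot]
  mul_one g := by
    show wmul g wone = g
    obtain ⟨x, y, z⟩ := g
    simp [wmul, wone, dot]
  inv_mul_cancel g := by
    show wmul (winv g) g = wone
    obtain ⟨x, y, z⟩ := g
    simp only [wmul, winv, wone, dot, mk.injEq, Pi.neg_apply, neg_mul]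
    refine ⟨by abel, by abel, ?_⟩
    simp [Finset.sum_neg_distrib]

theorem mul_def (g h : WH p n) :
    g * h = ⟨g.x + h.x, g.y + h.y, g.z + h.z + dot h.x g.y⟩ := rfl

theorem one_def : (1 : WH p n) = ⟨0, 0, 0⟩ := rfl

end WH

/-- `S_H`: the pairs `(x,y)` occurring in `H`. -/
def SH {p n : ℕ} (H : Subgroup (WH p n)) : Set ((Fin n → ZMod p) × (Fin n → ZMod p)) :=
  {v | ∃ z : ZMod p, (⟨v.1, v.2, z⟩ : WH p n) ∈ H}

/-- Symplectic inner product `⟨(x,y),(x',y')⟩ = x·y' - y·x'`. -/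
def symp {p n : ℕ} (v w : (Fin n → ZMod p) × (Fin n → ZMod p)) : ZMod p :=
  dot v.1 w.2 - dot v.2 w.1

/-- Orthogonal complement under the symplectic inner product. -/
def sperp {p n : ℕ} (S : Set ((Fin n → ZMod p) × (Fin n → ZMod p))) :
    Set ((Fin n → ZMod p) × (Fin n → ZMod p)) :=
  {v | ∀ s ∈ S, symp v s = 0}

/-! In a group whose commutators are central, `[g, h] = g h g⁻¹ h⁻¹` lies in `H` whenever `g`
normalizes `H` and `h ∈ H`; if `H` meets the centre trivially this commutator is therefore `1`.
So the normalizer of such an `H` is its centralizer. In the Weyl–Heisenberg group the commutator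
of `g` and `h` is the central element whose `z`-coordinate is the symplectic product of their
`(x, y)`-parts, so the centralizer of `H` is the preimage of `S_H^⊥`. -/

open Subgroup
open scoped commutatorElement

theorem Subgroup.normalizer_eq_centralizer_of_inf_center_eq_bot {G : Type*} [Group G]
    (hG : ∀ g h : G, ⁅g, h⁆ ∈ center G) {H : Subgroup G} (hZ : H ⊓ center G = ⊥) :
    normalizer (H : Set G) = centralizer (H : Set G) := by
  refine le_antisymm (fun g hg => mem_centralizer_iff.2 fun h hh => ?_) (centralizer_le_normalizer _)
  have hH : ⁅g, h⁆ ∈ H := by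
    rw [commutatorElement_def]
    exact H.mul_mem ((mem_normalizer_iff.1 hg h).1 hh) (H.inv_mem hh)
  have hone : ⁅g, h⁆ = 1 := by
    simpa [hZ] using mem_inf.2 ⟨hH, hG g h⟩
  exact (commutatorElement_eq_one_iff_mul_comm.1 hone).symm

namespace WH

variable {p n : ℕ}

theorem dot_eq_dotProduct (u v : Fin n → ZMod p) : dot u v = u ⬝ᵥ v := rfl

theorem inv_def (g : WH p n) : g⁻¹ = ⟨-g.x, -g.y, dot g.x g.y - g.z⟩ := rfl

theorem commutatorElement_eq (g h : WH p n) :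
    ⁅g, h⁆ = ⟨0, 0, symp (h.x, h.y) (g.x, g.y)⟩ := by
  apply WH.ext <;> simp only [commutatorElement_def, mul_def, inv_def, symp, dot_eq_dotProduct,
    dotProduct_add, neg_dotProduct, dotProduct_neg, dotProduct_comm h.y]
  · abel
  · abel
  · ring

theorem mk_zero_zero_mem_center (t : ZMod p) : (⟨0, 0, t⟩ : WH p n) ∈ center (WH p n) :=
  mem_center_iff.2 fun k => by
    apply WH.ext <;> simp only [mul_def, dot_eq_dotProduct, zero_dotProduct, dotProduct_zero]
    · abel
    · abel
    · ring

theorem commutatorElement_mem_center (g h : WH p n) : ⁅g, h⁆ ∈ center (WH p n) :=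
  commutatorElement_eq g h ▸ mk_zero_zero_mem_center _

theorem mul_comm_iff_symp_eq_zero {g h : WH p n} :
    h * g = g * h ↔ symp (g.x, g.y) (h.x, h.y) = 0 := by
  rw [← commutatorElement_eq_one_iff_mul_comm, commutatorElement_eq, one_def]
  simp

theorem mem_centralizer_iff_mem_sperp {H : Subgroup (WH p n)} {g : WH p n} :
    g ∈ centralizer (H : Set (WH p n)) ↔ (g.x, g.y) ∈ sperp (SH H) := by
  simp only [mem_centralizer_iff, SetLike.mem_coe, mul_comm_iff_symp_eq_zero]
  constructor
  · rintro hg s ⟨z, hz⟩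
    exact hg _ hz
  · exact fun hg h hh => hg (h.x, h.y) ⟨h.z, hh⟩

end WH

theorem normalizer_eq_sperp_general (p n : ℕ)
    (H : Subgroup (WH p n)) (hZ : H ⊓ Subgroup.center (WH p n) = ⊥) :
    (Subgroup.normalizer (H : Set (WH p n)) : Set (WH p n)) = {g : WH p n | (g.x, g.y) ∈ sperp (SH H)} := by
  rw [normalizer_eq_centralizer_of_inf_center_eq_bot WH.commutatorElement_mem_center hZ]
  ext g
  exact WH.mem_centralizer_iff_mem_sperp

/-- If `H` intersects the center trivially, then the normalizer of `H` in `G`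
equals `{(x,y,z) ∈ G : (x,y) ∈ S_H^⊥}`, the orthogonal complement taken with
respect to the symplectic inner product. -/
theorem normalizer_eq_sperp (p n : ℕ) [Fact p.Prime] (hn : 1 ≤ n)
    (H : Subgroup (WH p n)) (hZ : H ⊓ Subgroup.center (WH p n) = ⊥) :
    (Subgroup.normalizer (H : Set (WH p n)) : Set (WH p n)) = {g : WH p n | (g.x, g.y) ∈ sperp (SH H)} :=
  normalizer_eq_sperp_general p n H hZ
end

section
/- Let p be an odd prime and let H be an abelian subgroup of the Weyl–Heisenberg group G that does not contain the center of G. Then H₀ := {(x, y, 2⁻¹·(x·y)) : (x,y) ∈ S_H}, where 2⁻¹ is the inverse of 2 in ℤ/pℤ, is a subgroup of G, and H₀ is conjugate to H in G. -/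
lemma AddSubgroup.exists_linearMap_eq_of_map_add {p : ℕ} [Fact p.Prime] {V : Type*}
    [AddCommGroup V] [Module (ZMod p) V] (S : AddSubgroup V) (φ : V → ZMod p)
    (hφ : ∀ v ∈ S, ∀ w ∈ S, φ (v + w) = φ v + φ w) :
    ∃ L : V →ₗ[ZMod p] ZMod p, ∀ v ∈ S, L v = φ v := by
  let ψ : S →+ ZMod p :=
    { toFun := fun v => φ v
      map_zero' := by simpa using hφ 0 S.zero_mem 0 S.zero_mem
      map_add' := fun v w => hφ v v.2 w w.2 }
  obtain ⟨L, hL⟩ :=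
    LinearMap.exists_extend (p := AddSubgroup.toZModSubmodule p S) (ψ.toZModLinearMap p)
  exact ⟨L, fun v hv => LinearMap.congr_fun hL ⟨v, hv⟩⟩

lemma LinearMap.exists_dotProduct_eq {R ι : Type*} [CommSemiring R] [Fintype ι] [DecidableEq ι]
    (L : (ι → R) × (ι → R) →ₗ[R] R) : ∃ a b : ι → R, ∀ v, L v = a ⬝ᵥ v.1 + b ⬝ᵥ v.2 := by
  have eq_dotProduct (ℓ : Module.Dual R (ι → R)) (x : ι → R) :
      ℓ x = (dotProductEquiv R ι).symm ℓ ⬝ᵥ x := by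
    conv_lhs => rw [← (dotProductEquiv R ι).apply_symm_apply ℓ]
    rfl
  refine ⟨(dotProductEquiv R ι).symm (L ∘ₗ inl R _ _), (dotProductEquiv R ι).symm (L ∘ₗ inr R _ _),
    fun v => ?_⟩
  rw [← eq_dotProduct, ← eq_dotProduct, comp_apply, comp_apply, ← map_add, inl_apply, inr_apply,
    Prod.mk_add_mk, add_zero, zero_add]

lemma dot_eq_dotProduct {p n : ℕ} (u v : Fin n → ZMod p) : dot u v = u ⬝ᵥ v := rfl

def addSubgroupSH {p n : ℕ} (H : Subgroup (WH p n)) :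
    AddSubgroup ((Fin n → ZMod p) × (Fin n → ZMod p)) where
  carrier := SH H
  zero_mem' := ⟨0, H.one_mem⟩
  add_mem' := fun ⟨_, hv⟩ ⟨_, hw⟩ => ⟨_, H.mul_mem hv hw⟩
  neg_mem' := fun ⟨_, hv⟩ => ⟨_, H.inv_mem hv⟩

namespace WH

variable {p n : ℕ}

lemma conj_eq (g h : WH p n) :
    g⁻¹ * h * g = ⟨h.x, h.y, h.z + dot g.x h.y - dot h.x g.y⟩ := by
  show wmul (wmul (winv g) h) g = _
  simp only [wmul, winv, dot_eq_dotProduct, mk.injEq, dotProduct_add, dotProduct_neg,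
    dotProduct_comm g.x g.y]
  refine ⟨by abel, by abel, by ring⟩

lemma inv_mul_eq_of_x_eq_of_y_eq {g h : WH p n} (hx : g.x = h.x) (hy : g.y = h.y) :
    g⁻¹ * h = ⟨0, 0, h.z - g.z⟩ := by
  show wmul (winv g) h = _
  simp only [wmul, winv, dot_eq_dotProduct, mk.injEq, hx, hy, neg_add_cancel, dotProduct_neg]
  refine ⟨trivial, trivial, by ring⟩

lemma mul_comm_iff (g h : WH p n) : g * h = h * g ↔ dot h.x g.y = dot g.x h.y := by
  simp only [mul_def, mk.injEq, add_comm g.x, add_comm g.y, add_comm g.z, add_right_inj,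
    true_and]

lemma mem_center_iff (g : WH p n) : g ∈ Subgroup.center (WH p n) ↔ g.x = 0 ∧ g.y = 0 := by
  simp only [Subgroup.mem_center_iff, eq_comm (a := _ * g), mul_comm_iff, dot_eq_dotProduct]
  constructor
  · intro hg
    refine ⟨funext fun i => ?_, funext fun i => ?_⟩
    · simpa using (hg ⟨0, Pi.single i 1, 0⟩).symm
    · simpa using hg ⟨Pi.single i 1, 0, 0⟩
  · rintro ⟨hx, hy⟩ h
    simp [hx, hy]

lemma central_pow (t : ZMod p) (k : ℕ) : (⟨0, 0, t⟩ : WH p n) ^ k = ⟨0, 0, k * t⟩ := by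
  induction k with
  | zero => simp [one_def]
  | succ k ih => simp [pow_succ, ih, mul_def, dot, add_mul]

section Prime

variable [Fact p.Prime] {H : Subgroup (WH p n)}

lemma center_le_of_mem {t : ZMod p} (ht : t ≠ 0)
    (htH : (⟨0, 0, t⟩ : WH p n) ∈ H) : Subgroup.center (WH p n) ≤ H := by
  intro g hg
  obtain ⟨hx, hy⟩ := (mem_center_iff g).mp hg
  have hg_pow : g = (⟨0, 0, t⟩ : WH p n) ^ (g.z * t⁻¹).val := by
    rw [central_pow, ZMod.natCast_zmod_val, inv_mul_cancel_right₀ ht]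
    ext <;> simp [hx, hy]
  exact hg_pow ▸ pow_mem htH _

lemma injOn_x_y (hZ : ¬ Subgroup.center (WH p n) ≤ H) :
    Set.InjOn (fun g : WH p n => (g.x, g.y)) H := by
  intro g hg h hh hgh
  obtain ⟨hx, hy⟩ := Prod.mk.inj hgh
  by_contra hne
  have hz : h.z - g.z ≠ 0 := sub_ne_zero.mpr fun hz => hne (WH.ext hx hy hz.symm)
  have hmem := H.mul_mem (H.inv_mem hg) hh
  rw [inv_mul_eq_of_x_eq_of_y_eq hx hy] at hmem
  exact hZ (center_le_of_mem hz hmem)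

lemma exists_linearMap_z_eq (hp : p ≠ 2) (hab : ∀ a ∈ H, ∀ b ∈ H, a * b = b * a)
    (hZ : ¬ Subgroup.center (WH p n) ≤ H) :
    ∃ L : (Fin n → ZMod p) × (Fin n → ZMod p) →ₗ[ZMod p] ZMod p,
      ∀ g ∈ H, g.z = (2 : ZMod p)⁻¹ * dot g.x g.y + L (g.x, g.y) := by
  have h2 : (2 : ZMod p) ≠ 0 := Ring.two_ne_zero (by rwa [ZMod.ringChar_zmod_n])
  choose! f hf using fun v (hv : v ∈ SH H) => hv
  have hz : ∀ g ∈ H, g.z = f (g.x, g.y) := fun g hg =>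
    congrArg WH.z (injOn_x_y hZ hg (hf _ ⟨g.z, hg⟩) rfl)
  have hf_add : ∀ v ∈ SH H, ∀ w ∈ SH H, f (v + w) = f v + f w + dot w.1 v.2 := fun v hv w hw =>
    (hz _ (H.mul_mem (hf v hv) (hf w hw))).symm
  have h_isotropic : ∀ v ∈ SH H, ∀ w ∈ SH H, dot w.1 v.2 = dot v.1 w.2 := fun v hv w hw =>
    (mul_comm_iff _ _).mp (hab _ (hf v hv) _ (hf w hw))
  obtain ⟨L, hL⟩ := (addSubgroupSH H).exists_linearMap_eq_of_map_add
    (fun v => f v - (2 : ZMod p)⁻¹ * dot v.1 v.2) fun v hv w hw => by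
      have hdot : dot (v + w).1 (v + w).2 = dot v.1 v.2 + dot w.1 w.2 + 2 * dot w.1 v.2 := by
        have := h_isotropic v hv w hw
        simp only [Prod.fst_add, Prod.snd_add, dot_eq_dotProduct, add_dotProduct,
          dotProduct_add] at this ⊢
        linear_combination -this
      simp only [hf_add v hv w hw, hdot]
      field_simp
      ring
  refine ⟨L, fun g hg => ?_⟩
  rw [hL _ ⟨g.z, hg⟩, ← hz g hg]
  ring

end Prime

end WH

theorem H0_subgroup_conjugate_general (p n : ℕ) [Fact p.Prime] (hp : p ≠ 2)
    (H : Subgroup (WH p n))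
    (hab : ∀ a ∈ H, ∀ b ∈ H, a * b = b * a)
    (hZ : ¬ Subgroup.center (WH p n) ≤ H) :
    ∃ H₀ : Subgroup (WH p n),
      (H₀ : Set (WH p n)) =
          {g : WH p n | (g.x, g.y) ∈ SH H ∧ g.z = (2 : ZMod p)⁻¹ * dot g.x g.y} ∧
      ∃ g : WH p n,
        (H₀ : Set (WH p n)) = (fun h => g⁻¹ * h * g) '' (H : Set (WH p n)) := by
  obtain ⟨L, hL⟩ := WH.exists_linearMap_z_eq hp hab hZ
  obtain ⟨a, b, hLab⟩ := L.exists_dotProduct_eq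
  set g : WH p n := ⟨-b, a, 0⟩
  have hconj : ∀ h ∈ H, g⁻¹ * h * g = ⟨h.x, h.y, (2 : ZMod p)⁻¹ * dot h.x h.y⟩ := by
    intro h hh
    rw [WH.conj_eq, hL h hh, hLab]
    simp only [g, dot_eq_dotProduct, neg_dotProduct, dotProduct_comm h.x a]
    congr 1
    ring
  refine ⟨H.map (MulAut.conj g⁻¹).toMonoidHom, ?_, g, by ext; simp⟩
  ext w
  simp only [Subgroup.coe_map, Set.mem_image, SetLike.mem_coe, MulEquiv.coe_toMonoidHom,
    MulAut.conj_apply, inv_inv]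
  constructor
  · rintro ⟨h, hh, rfl⟩
    rw [hconj h hh]
    exact ⟨⟨h.z, hh⟩, rfl⟩
  · rintro ⟨⟨z, hz⟩, hw⟩
    exact ⟨_, hz, by rw [hconj _ hz]; exact WH.ext rfl rfl hw.symm⟩

/-- For odd `p`, if `H` is an abelian subgroup of the Weyl–Heisenberg group not containing
the center, then `H₀ = {(x, y, 2⁻¹·(x·y)) : (x,y) ∈ S_H}` is a subgroup of `G` that is
conjugate to `H`. -/
theorem H0_subgroup_conjugate (p n : ℕ) [Fact p.Prime] (hp : p ≠ 2) (hn : 1 ≤ n)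
    (H : Subgroup (WH p n))
    (hab : ∀ a ∈ H, ∀ b ∈ H, a * b = b * a)
    (hZ : ¬ Subgroup.center (WH p n) ≤ H) :
    ∃ H₀ : Subgroup (WH p n),
      (H₀ : Set (WH p n)) =
          {g : WH p n | (g.x, g.y) ∈ SH H ∧ g.z = (2 : ZMod p)⁻¹ * dot g.x g.y} ∧
      ∃ g : WH p n,
        (H₀ : Set (WH p n)) = (fun h => g⁻¹ * h * g) '' (H : Set (WH p n)) :=
  H0_subgroup_conjugate_general p n hp H hab hZ
end

section
/- Let p = 2. If H is a subgroup of the Weyl–Heisenberg group G that does not contain the center of G, then x·y = 0 in ℤ/2ℤ for every (x,y,z) ∈ H. -/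
/-!
In characteristic 2 every element squares to `(0, 0, x·y)`, while the centre consists of the
elements `(0, 0, z)` and is generated by `(0, 0, 1)`. So an element of `H` with `x·y = 1` would
put the whole centre into `H`.
-/

@[simp]
theorem dot_zero_left {p n : ℕ} (v : Fin n → ZMod p) : dot 0 v = 0 := by
  simp [dot]

@[simp]
theorem dot_zero_right {p n : ℕ} (u : Fin n → ZMod p) : dot u 0 = 0 := by
  simp [dot]

@[simp]
theorem dot_single_left {p n : ℕ} (i : Fin n) (v : Fin n → ZMod p) :
    dot (Pi.single i 1) v = v i := by
  simp [dot, Pi.single_apply]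

@[simp]
theorem dot_single_right {p n : ℕ} (u : Fin n → ZMod p) (i : Fin n) :
    dot u (Pi.single i 1) = u i := by
  simp [dot, Pi.single_apply]

namespace WH

variable {p n : ℕ}

theorem commute_iff {g h : WH p n} : Commute g h ↔ dot h.x g.y = dot g.x h.y := by
  rw [Commute, SemiconjBy, mul_def, mul_def, WH.ext_iff]
  simp only [add_comm g.x, add_comm g.y, true_and]
  constructor <;> intro hz <;> linear_combination hz

theorem x_eq_zero_of_mem_center {g : WH p n} (hg : g ∈ Subgroup.center (WH p n)) :
    g.x = 0 := by
  funext i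
  have := commute_iff.mp (Subgroup.mem_center_iff.mp hg ⟨0, Pi.single i 1, 0⟩).symm
  simpa using this.symm

theorem y_eq_zero_of_mem_center {g : WH p n} (hg : g ∈ Subgroup.center (WH p n)) :
    g.y = 0 := by
  funext i
  have := commute_iff.mp (Subgroup.mem_center_iff.mp hg ⟨Pi.single i 1, 0, 0⟩).symm
  simpa using this

theorem zpow_mk_zero_zero_one (k : ℤ) : (⟨0, 0, 1⟩ : WH p n) ^ k = ⟨0, 0, k⟩ := by
  induction k using Int.induction_on with
  | zero => simp [one_def]
  | succ k ih => rw [zpow_add_one, ih, mul_def]; simp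
  | pred k ih => rw [zpow_sub_one, ih, mul_inv_eq_iff_eq_mul, mul_def]; simp

theorem center_le_of_mk_zero_zero_one_mem {H : Subgroup (WH p n)}
    (h : (⟨0, 0, 1⟩ : WH p n) ∈ H) : Subgroup.center (WH p n) ≤ H := by
  intro g hg
  have hg_eq : g = (⟨0, 0, 1⟩ : WH p n) ^ (g.z.cast : ℤ) := by
    rw [zpow_mk_zero_zero_one, ZMod.intCast_zmod_cast]
    ext1 <;> simp [x_eq_zero_of_mem_center hg, y_eq_zero_of_mem_center hg]
  exact hg_eq ▸ H.zpow_mem h _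

theorem mul_self_eq_mk_zero_zero_dot (g : WH 2 n) : g * g = ⟨0, 0, dot g.x g.y⟩ := by
  ext i <;> simp [mul_def, CharTwo.add_self_eq_zero]

end WH

theorem p_two_dot_eq_zero_general (n : ℕ)
    (H : Subgroup (WH 2 n)) (hZ : ¬ Subgroup.center (WH 2 n) ≤ H) :
    ∀ g ∈ H, dot g.x g.y = 0 := by
  intro g hg
  by_contra hne
  have h_one : dot g.x g.y = 1 := Fin.eq_one_of_ne_zero _ hne
  apply hZ (WH.center_le_of_mk_zero_zero_one_mem _)
  rw [← h_one, ← WH.mul_self_eq_mk_zero_zero_dot]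
  exact H.mul_mem hg hg

/-- For `p = 2`: if a subgroup `H` of the Weyl–Heisenberg group does not contain the
center, then `x·y = 0` for every `(x,y,z) ∈ H`. -/
theorem p_two_dot_eq_zero (n : ℕ) (hn : 1 ≤ n)
    (H : Subgroup (WH 2 n)) (hZ : ¬ Subgroup.center (WH 2 n) ≤ H) :
    ∀ g ∈ H, dot g.x g.y = 0 :=
  p_two_dot_eq_zero_general n H hZ
end

section
/- Let k, l ∈ ℤ/pℤ with k + l ≠ 0, and let U be the permutation matrix on ℂ^(p^n) ⊗ ℂ^(p^n) defined on the standard basis by U|u,v⟩ = |u−v, (k+l)⁻¹(ku+lv)⟩. Then for every g ∈ G, U (ρ_k(g) ⊗ ρ_l(g)) U† = I_{p^n} ⊗ ρ_{k+l}(g), where I_{p^n} is the p^n × p^n identity matrix (the Clebsch–Gordan decomposition for k+l ≠ 0). -/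
open Matrix Kronecker

/-- The primitive `p`-th root of unity `ω_p = e^(2πi/p)`. -/
noncomputable def omega (p : ℕ) : ℂ := Complex.exp (2 * Real.pi * Complex.I / p)

/-- The `pⁿ`-dimensional representation
`ρ_k(x,y,z) = Σ_u ω_p^(k(z+y·u)) |u+x⟩⟨u|` of the Weyl–Heisenberg group,
written as a matrix indexed by the standard basis `{|u⟩ : u ∈ (ℤ/pℤ)ⁿ}`. -/
noncomputable def rho (p n : ℕ) (k : ZMod p) (g : WH p n) :
    Matrix (Fin n → ZMod p) (Fin n → ZMod p) ℂ :=
  fun a b => if a = b + g.x then omega p ^ (k * (g.z + dot g.y b)).val else 0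
/-- The Clebsch–Gordan permutation matrix `U|u,v⟩ = |u−v, (k+l)⁻¹(ku+lv)⟩`
for `k + l ≠ 0`. -/
def UCG (p n : ℕ) (k l : ZMod p) :
    Matrix ((Fin n → ZMod p) × (Fin n → ZMod p))
      ((Fin n → ZMod p) × (Fin n → ZMod p)) ℂ :=
  fun a uv => if a = (uv.1 - uv.2, (k + l)⁻¹ • (k • uv.1 + l • uv.2)) then 1 else 0

/-!
`U` is the permutation matrix of the linear automorphism `σ(u, v) = (u - v, (k+l)⁻¹(ku + lv))`
of `(𝔽_pⁿ)²`, so conjugating by `U` only relabels matrix entries through `σ⁻¹`. The matrix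
`ρ_k(g) ⊗ ρ_l(g)` shifts by `(x, x)`, which `σ` maps to `(0, x)`, and its phase
`k(z + y·u) + l(z + y·v)` depends on `(u, v)` only through `ku + lv = (k+l) σ(u, v)₂`;
these are exactly the shift and the phase of `I ⊗ ρ_{k+l}(g)`.
-/

section ClebschGordanEquiv

variable {F V : Type*} [Field F] [AddCommGroup V] [Module F V] {k l : F}

def clebschGordanEquiv (k l : F) (hkl : k + l ≠ 0) : (V × V) ≃ₗ[F] V × V where
  toFun w := (w.1 - w.2, (k + l)⁻¹ • (k • w.1 + l • w.2))
  invFun w := (w.2 + (k + l)⁻¹ • l • w.1, w.2 - (k + l)⁻¹ • k • w.1)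
  map_add' v w := by ext <;> simp only [Prod.fst_add, Prod.snd_add] <;> module
  map_smul' c w := by
    ext <;> simp only [Prod.smul_fst, Prod.smul_snd, RingHom.id_apply] <;> module
  left_inv w := by ext <;> dsimp only <;> match_scalars <;> field_simp <;> ring
  right_inv w := by ext <;> dsimp only <;> match_scalars <;> field_simp <;> ring

theorem clebschGordanEquiv_apply (hkl : k + l ≠ 0) (w : V × V) :
    clebschGordanEquiv k l hkl w = (w.1 - w.2, (k + l)⁻¹ • (k • w.1 + l • w.2)) :=
  rfl

theorem smul_clebschGordanEquiv_snd (hkl : k + l ≠ 0) (w : V × V) :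
    (k + l) • (clebschGordanEquiv k l hkl w).2 = k • w.1 + l • w.2 := by
  rw [clebschGordanEquiv_apply, smul_smul, mul_inv_cancel₀ hkl, one_smul]

theorem clebschGordanEquiv_diag (hkl : k + l ≠ 0) (x : V) :
    clebschGordanEquiv k l hkl (x, x) = (0, x) := by
  rw [clebschGordanEquiv_apply, sub_self, ← add_smul, smul_smul, inv_mul_cancel₀ hkl, one_smul]

end ClebschGordanEquiv

theorem Matrix.permMatrix_mul_mul_conjTranspose_permMatrix {ι R : Type*} [DecidableEq ι]
    [Fintype ι] [NonAssocSemiring R] [StarRing R] (σ : Equiv.Perm ι) (M : Matrix ι ι R) :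
    σ.permMatrix R * M * (σ.permMatrix R)ᴴ = M.submatrix σ σ := by
  rw [conjTranspose_permMatrix, PEquiv.toMatrix_toPEquiv_mul, PEquiv.mul_toMatrix_toPEquiv,
    submatrix_submatrix]
  rfl

theorem omega_pow_val {p : ℕ} [NeZero p] (j : ZMod p) :
    omega p ^ j.val = ZMod.stdAddChar j := by
  rw [ZMod.stdAddChar_apply, ZMod.toCircle_apply, omega, ← Complex.exp_nat_mul]
  ring_nf

section WeylHeisenberg

variable {p n : ℕ}

theorem UCG_eq_permMatrix [Fact p.Prime] {k l : ZMod p} (hkl : k + l ≠ 0) :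
    UCG p n k l = Equiv.Perm.permMatrix ℂ (clebschGordanEquiv k l hkl).toEquiv.symm := by
  ext a w
  simp only [UCG, PEquiv.toMatrix_apply, Equiv.toPEquiv_apply, Option.mem_def,
    Option.some.injEq, Equiv.symm_apply_eq]
  rfl

theorem rho_apply [NeZero p] (k : ZMod p) (g : WH p n) (a b : Fin n → ZMod p) :
    rho p n k g a b =
      if a = b + g.x then ZMod.stdAddChar (k * (g.z + g.y ⬝ᵥ b)) else 0 := by
  simp only [rho, omega_pow_val]
  rfl

theorem rho_kronecker_rho_apply [NeZero p] (k l : ZMod p) (g : WH p n)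
    (v w : (Fin n → ZMod p) × (Fin n → ZMod p)) :
    (rho p n k g ⊗ₖ rho p n l g) v w =
      if v = w + (g.x, g.x) then
        ZMod.stdAddChar (k * (g.z + g.y ⬝ᵥ w.1) + l * (g.z + g.y ⬝ᵥ w.2)) else 0 := by
  rw [kroneckerMap_apply, rho_apply, rho_apply, ite_zero_mul_ite_zero, AddChar.map_add_eq_mul]
  simp only [Prod.ext_iff, Prod.fst_add, Prod.snd_add]

theorem one_kronecker_rho_apply [NeZero p] (m : ZMod p) (g : WH p n)
    (v w : (Fin n → ZMod p) × (Fin n → ZMod p)) :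
    ((1 : Matrix (Fin n → ZMod p) (Fin n → ZMod p) ℂ) ⊗ₖ rho p n m g) v w =
      if v = w + (0, g.x) then ZMod.stdAddChar (m * (g.z + g.y ⬝ᵥ w.2)) else 0 := by
  rw [kroneckerMap_apply, one_apply, rho_apply, ite_zero_mul_ite_zero, one_mul]
  simp only [Prod.ext_iff, Prod.fst_add, Prod.snd_add, add_zero]

end WeylHeisenberg

theorem clebsch_gordan_ne_zero_general (p n : ℕ) [Fact p.Prime]
    (k l : ZMod p) (hkl : k + l ≠ 0) (g : WH p n) :
    UCG p n k l * (rho p n k g ⊗ₖ rho p n l g) * (UCG p n k l)ᴴ =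
      (1 : Matrix (Fin n → ZMod p) (Fin n → ZMod p) ℂ) ⊗ₖ rho p n (k + l) g := by
  set σ := clebschGordanEquiv (V := Fin n → ZMod p) k l hkl
  ext a b
  rw [UCG_eq_permMatrix hkl, permMatrix_mul_mul_conjTranspose_permMatrix, submatrix_apply,
    rho_kronecker_rho_apply, one_kronecker_rho_apply]
  have hshift : σ.symm a = σ.symm b + (g.x, g.x) ↔ a = b + (0, g.x) := by
    rw [LinearEquiv.symm_apply_eq, map_add, LinearEquiv.apply_symm_apply,
      clebschGordanEquiv_diag]
  have hphase : k * (g.z + g.y ⬝ᵥ (σ.symm b).1) + l * (g.z + g.y ⬝ᵥ (σ.symm b).2) =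
      (k + l) * (g.z + g.y ⬝ᵥ b.2) := by
    have hsnd := smul_clebschGordanEquiv_snd hkl (σ.symm b)
    rw [LinearEquiv.apply_symm_apply] at hsnd
    calc _ = (k + l) * g.z + g.y ⬝ᵥ (k • (σ.symm b).1 + l • (σ.symm b).2) := by
          rw [dotProduct_add, dotProduct_smul, dotProduct_smul, smul_eq_mul, smul_eq_mul]
          ring
      _ = (k + l) * (g.z + g.y ⬝ᵥ b.2) := by
          rw [← hsnd, dotProduct_smul, smul_eq_mul]
          ring
  exact if_congr hshift (congrArg _ hphase) rfl

/-- Clebsch–Gordan decomposition for `k + l ≠ 0`: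
`U (ρ_k(g) ⊗ ρ_l(g)) U† = I_{pⁿ} ⊗ ρ_{k+l}(g)`. -/
theorem clebsch_gordan_ne_zero (p n : ℕ) [Fact p.Prime] (hn : 1 ≤ n)
    (k l : ZMod p) (hkl : k + l ≠ 0) (g : WH p n) :
    UCG p n k l * (rho p n k g ⊗ₖ rho p n l g) * (UCG p n k l)ᴴ =
      (1 : Matrix (Fin n → ZMod p) (Fin n → ZMod p) ℂ) ⊗ₖ rho p n (k + l) g :=
  clebsch_gordan_ne_zero_general p n k l hkl g
end

section
/- Let α be a nonzero element of ℤ/pℤ and k ∈ ℤ/pℤ, and let U_α be the permutation matrix on ℂ^(p^n) defined by U_α|u⟩ = |αu⟩. Then for every g ∈ G, U_α ρ_k(g) U_α† = ρ_{kα⁻²}(φ_α(g)), where φ_α(x,y,z) = (αx, αy, α²z) (the irreducible representation label changes from k to kα⁻²). -/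
open Matrix Kronecker

/-- The permutation matrix `U_α|u⟩ = |αu⟩`. -/
def Ualpha (p n : ℕ) (α : ZMod p) : Matrix (Fin n → ZMod p) (Fin n → ZMod p) ℂ :=
  fun a b => if a = α • b then 1 else 0

/-!
Conjugation by `U_α` relabels both matrix indices by `u ↦ α⁻¹ u`. This turns the shift by `x`
into a shift by `α x`, and the phase `k (z + y · α⁻¹ u)` equals `k α⁻² (α² z + (α y) · u)`.
-/

section

variable {p n : ℕ}

lemma dot_smul_left (c : ZMod p) (u v : Fin n → ZMod p) : dot (c • u) v = c * dot u v :=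
  smul_dotProduct c u v

lemma dot_smul_right (c : ZMod p) (u v : Fin n → ZMod p) : dot u (c • v) = c * dot u v :=
  dotProduct_smul c u v

lemma inv_smul_eq_inv_smul_add_iff₀ {G V : Type*} [GroupWithZero G] [AddMonoid V]
    [DistribMulAction G V] {c : G} (hc : c ≠ 0) (a b x : V) :
    c⁻¹ • a = c⁻¹ • b + x ↔ a = b + c • x := by
  rw [inv_smul_eq_iff₀ hc, smul_add, smul_inv_smul₀ hc]

variable [Fact p.Prime]

lemma Ualpha_mul_mul_conjTranspose_apply {α : ZMod p} (hα : α ≠ 0)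
    (M : Matrix (Fin n → ZMod p) (Fin n → ZMod p) ℂ) (a b : Fin n → ZMod p) :
    (Ualpha p n α * M * (Ualpha p n α)ᴴ) a b = M (α⁻¹ • a) (α⁻¹ • b) := by
  have hperm (u v : Fin n → ZMod p) : u = α • v ↔ v = α⁻¹ • u := by
    rw [← inv_smul_eq_iff₀ hα, eq_comm]
  simp only [Matrix.mul_apply, Matrix.conjTranspose_apply, Ualpha, hperm, ite_mul, mul_ite,
    one_mul, mul_one, zero_mul, mul_zero, apply_ite (star : ℂ → ℂ), star_one, star_zero,
    Finset.sum_ite_eq', Finset.mem_univ, if_true]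

end

theorem change_of_label_general (p n : ℕ) [Fact p.Prime]
    (α : ZMod p) (hα : α ≠ 0) (k : ZMod p) (g : WH p n) :
    Ualpha p n α * rho p n k g * (Ualpha p n α)ᴴ =
      rho p n (k * (α ^ 2)⁻¹) ⟨α • g.x, α • g.y, α ^ 2 * g.z⟩ := by
  ext a b
  have hexp : k * (g.z + dot g.y (α⁻¹ • b)) =
      k * (α ^ 2)⁻¹ * (α ^ 2 * g.z + dot (α • g.y) b) := by
    rw [dot_smul_left, dot_smul_right]
    field_simp
  simp only [Ualpha_mul_mul_conjTranspose_apply hα, rho, inv_smul_eq_inv_smul_add_iff₀ hα, hexp]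

/-- Changing the label of an irreducible representation:
`U_α ρ_k(g) U_α† = ρ_{kα⁻²}(φ_α(g))` where `φ_α(x,y,z) = (αx, αy, α²z)`. -/
theorem change_of_label (p n : ℕ) [Fact p.Prime] (hn : 1 ≤ n)
    (α : ZMod p) (hα : α ≠ 0) (k : ZMod p) (g : WH p n) :
    Ualpha p n α * rho p n k g * (Ualpha p n α)ᴴ =
      rho p n (k * (α ^ 2)⁻¹) ⟨α • g.x, α • g.y, α ^ 2 * g.z⟩ :=
  change_of_label_general p n α hα k g
end
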